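/- arXiv:1506.08564 — 2 statements merged into one kernel-verified Lean document; each statement's English description precedes it below -/
import Mathlib

section
/- For each integer k ≥ 1 let m_Z(0,k,t) = Σ_{i≥0} t^{k+2i}/(i!·(k+i)!) for t ≥ 0, and let t*_k be the unique t > 0 with m_Z(0,k,t) = 1. Let α* be the unique solution in (1,∞) of coth α = α. Then t*_k/k → (1/2)·√(α*² − 1) as k → ∞. Equivalently, for any a ≥ 0, m_Z(0,k,ak) → 0 as k → ∞ if a < (1/2)√(α*²−1), and m_Z(0,k,ak) → ∞ as k → ∞ if a > (1/2)√(α*²−1). -/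
/-! Writing `t^(k+2i) / (i! (k+i)!) = x^(-k) · (t/x)^i / i! · (t x)^(k+i) / (k+i)!` and summing
gives the Chernoff bound `m_ℤ(0,k,t) ≤ exp (t (x + 1/x)) / x^k`; for `x = e^β`, `t = a k` it
reads `exp (k (2 a cosh β - β))`. Conversely, when `2 a sinh β = 1` the two Poisson parameters
`t/x` and `t x` differ by exactly `k`, so a single term of the series sits at both Poisson modes,
and Stirling's bound shows `m_ℤ(0,k,a k) ≥ exp (k (coth β - β)) / O(k²)`.

Since `coth β - β` decreases and vanishes at `α*`, the critical speed is
`1 / (2 sinh α*) = √(α*² - 1) / 2`: below it the Chernoff exponent `2 a cosh α* - α*` is negative,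
above it `β = arsinh (1 / (2 a)) < α*` gives a positive lower exponent. Monotonicity of `m_ℤ`
in `t` then traps `t*_k / k` between any two speeds on either side of the critical one. -/

open Filter

/-- `m_ℤ(0,k,t) = Σ_{i≥0} t^{k+2i}/(i!·(k+i)!)`, the path-generating function between
vertices at distance `k` in the nearest-neighbour graph on `ℤ`. -/
noncomputable def mZ (k : ℕ) (t : ℝ) : ℝ :=
  ∑' i : ℕ, t ^ (k + 2 * i) / ((Nat.factorial i : ℝ) * (Nat.factorial (k + i) : ℝ))

open Real Nat

section Series

variable {k : ℕ} {t x : ℝ}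

lemma mZ_term_eq_mul_div_pow (hx : 0 < x) (i : ℕ) :
    t ^ (k + 2 * i) / ((i ! : ℝ) * ((k + i)! : ℝ)) =
      (t / x) ^ i / i ! * ((t * x) ^ (k + i) / (k + i)!) / x ^ k := by
  rw [div_pow, mul_pow]
  field_simp
  ring

lemma mZ_term_nonneg (ht : 0 ≤ t) (i : ℕ) :
    0 ≤ t ^ (k + 2 * i) / ((i ! : ℝ) * ((k + i)! : ℝ)) := by
  positivity

lemma sum_range_mZ_term_le (ht : 0 ≤ t) (hx : 0 < x) (n : ℕ) :
    ∑ i ∈ Finset.range n, t ^ (k + 2 * i) / ((i ! : ℝ) * ((k + i)! : ℝ)) ≤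
      exp (t / x + t * x) / x ^ k := by
  simp_rw [mZ_term_eq_mul_div_pow hx, ← Finset.sum_div, exp_add]
  gcongr
  calc ∑ i ∈ Finset.range n, (t / x) ^ i / i ! * ((t * x) ^ (k + i) / (k + i)!)
      ≤ ∑ i ∈ Finset.range n, (t / x) ^ i / i ! * exp (t * x) := by
        gcongr with i
        exact pow_div_factorial_le_exp _ (by positivity) _
    _ ≤ exp (t / x) * exp (t * x) := by
        rw [← Finset.sum_mul]
        gcongr
        exact sum_le_exp_of_nonneg (div_nonneg ht hx.le) n

lemma summable_mZ_term (ht : 0 ≤ t) :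
    Summable fun i : ℕ => t ^ (k + 2 * i) / ((i ! : ℝ) * ((k + i)! : ℝ)) :=
  summable_of_sum_range_le (mZ_term_nonneg ht) (sum_range_mZ_term_le ht one_pos)

end Series

lemma mZ_nonneg (k : ℕ) {t : ℝ} (ht : 0 ≤ t) : 0 ≤ mZ k t :=
  tsum_nonneg (mZ_term_nonneg ht)

lemma mZ_le_exp_div_pow (k : ℕ) {t x : ℝ} (ht : 0 ≤ t) (hx : 0 < x) :
    mZ k t ≤ exp (t / x + t * x) / x ^ k :=
  Real.tsum_le_of_sum_range_le (mZ_term_nonneg ht) (sum_range_mZ_term_le ht hx)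

lemma mZ_term_le_mZ (k i : ℕ) {t : ℝ} (ht : 0 ≤ t) :
    t ^ (k + 2 * i) / ((i ! : ℝ) * ((k + i)! : ℝ)) ≤ mZ k t :=
  (summable_mZ_term ht).le_tsum i fun j _ => mZ_term_nonneg ht j

lemma mZ_mono (k : ℕ) : MonotoneOn (mZ k) (Set.Ici 0) := fun _ ht₁ _ _ h =>
  (summable_mZ_term ht₁).tsum_le_tsum (fun i => by gcongr)
    (summable_mZ_term (le_trans ht₁ h))

lemma factorial_le_exp_one_mul_pow {n : ℕ} (hn : n ≠ 0) :
    (n ! : ℝ) ≤ exp 1 * n * (n / exp 1) ^ n := by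
  have hS : Stirling.stirlingSeq n ≤ exp 1 / √2 := by
    obtain ⟨m, rfl⟩ := Nat.exists_eq_succ_of_ne_zero hn
    simpa [Stirling.stirlingSeq_one] using Stirling.stirlingSeq'_antitone (Nat.zero_le m)
  have hn1 : (1 : ℝ) ≤ n := by exact_mod_cast Nat.one_le_iff_ne_zero.mpr hn
  rw [Stirling.stirlingSeq, div_le_iff₀ (by positivity)] at hS
  calc (n ! : ℝ) ≤ exp 1 / √2 * (√(2 * n) * (n / exp 1) ^ n) := hS
    _ = exp 1 * √n * (n / exp 1) ^ n := by
        rw [Real.sqrt_mul zero_le_two]; field_simp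
    _ ≤ exp 1 * n * (n / exp 1) ^ n := by
        gcongr; exact Real.sqrt_le_self_iff.mpr (Or.inr hn1)

lemma exp_le_mul_pow_ceil_div_factorial {l : ℝ} (hl : 1 ≤ l) :
    exp l ≤ exp 2 * ⌈l⌉₊ * (l ^ ⌈l⌉₊ / (⌈l⌉₊ ! : ℝ)) := by
  set m := ⌈l⌉₊
  have hl0 : 0 < l := by linarith
  have hlm : l ≤ m := Nat.le_ceil l
  have hml : (m : ℝ) < l + 1 := Nat.ceil_lt_add_one hl0.le
  have hm : m ≠ 0 := by positivity
  -- `m / l ≤ exp (m / l - 1)`, and `m (m / l - 1) ≤ m - l + 1` because `(m - l) ^ 2 < 1 ≤ l`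
  have hratio : ((m : ℝ) / l) ^ m ≤ exp (m - l + 1) := by
    calc ((m : ℝ) / l) ^ m ≤ exp ((m : ℝ) / l - 1) ^ m := by
          gcongr; linarith [add_one_le_exp ((m : ℝ) / l - 1)]
      _ = exp (m * ((m : ℝ) / l - 1)) := (exp_nat_mul _ m).symm
      _ ≤ exp (m - l + 1) := by
          gcongr
          rw [mul_sub, mul_one, mul_div_assoc', sub_le_iff_le_add, div_le_iff₀ hl0]
          nlinarith
  rw [mul_div_assoc', le_div_iff₀ (by positivity)]
  calc exp l * m ! ≤ exp l * (exp 1 * m * (m / exp 1) ^ m) := by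
        gcongr; exact factorial_le_exp_one_mul_pow hm
    _ = exp 1 * m * (exp (l - m) * ((m : ℝ) / l) ^ m) * l ^ m := by
        rw [div_pow, div_pow, exp_one_pow, exp_sub]; field_simp
    _ ≤ exp 1 * m * (exp (l - m) * exp (m - l + 1)) * l ^ m := by gcongr
    _ = exp 2 * m * l ^ m := by
        rw [← exp_add, show l - m + (m - l + 1) = 1 by ring, show (2 : ℝ) = 1 + 1 by norm_num,
          exp_add]
        ring

lemma exp_div_pow_le_mZ {k : ℕ} {t x : ℝ} (hx : 0 < x) (hkt : t * x = t / x + k)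
    (h1 : 1 ≤ t / x) : exp (t / x + t * x) / x ^ k ≤ 4 * exp 4 * (t * x) ^ 2 * mZ k t := by
  set i := ⌈t / x⌉₊
  have ht : 0 ≤ t := ((div_pos_iff_of_pos_right hx).mp (by linarith)).le
  have htx : 1 ≤ t * x := by rw [hkt]; linarith [(k.cast_nonneg : (0 : ℝ) ≤ k)]
  have hceil : ⌈t * x⌉₊ = k + i := by
    rw [hkt, Nat.ceil_add_natCast (by linarith), add_comm]
  have hP := exp_le_mul_pow_ceil_div_factorial h1
  have hQ := exp_le_mul_pow_ceil_div_factorial htx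
  rw [hceil] at hQ
  have hmodes : (i : ℝ) * ((k + i : ℕ) : ℝ) ≤ (2 * (t * x)) ^ 2 := by
    have hki : ((k + i : ℕ) : ℝ) ≤ 2 * (t * x) := by
      rw [← hceil]; linarith [Nat.ceil_lt_add_one (by linarith : 0 ≤ t * x)]
    have hi : (i : ℝ) ≤ ((k + i : ℕ) : ℝ) := by exact_mod_cast Nat.le_add_left i k
    rw [sq]; gcongr; exact hi.trans hki
  have hterm := mZ_term_le_mZ k i ht
  rw [mZ_term_eq_mul_div_pow hx] at hterm
  calc exp (t / x + t * x) / x ^ k = exp (t / x) * exp (t * x) / x ^ k := by rw [exp_add]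
    _ ≤ exp 2 * i * ((t / x) ^ i / i !) *
          (exp 2 * ((k + i : ℕ) : ℝ) * ((t * x) ^ (k + i) / (k + i)!)) / x ^ k := by
        gcongr
    _ = exp 4 * (i * ((k + i : ℕ) : ℝ)) *
          ((t / x) ^ i / i ! * ((t * x) ^ (k + i) / (k + i)!) / x ^ k) := by
        rw [show (4 : ℝ) = 2 + 2 by norm_num, exp_add]; ring
    _ ≤ exp 4 * (2 * (t * x)) ^ 2 * mZ k t := by gcongr
    _ = 4 * exp 4 * (t * x) ^ 2 * mZ k t := by ring

lemma exp_div_exp_add_mul_exp_div_pow (a β : ℝ) (k : ℕ) :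
    exp (a * k / exp β + a * k * exp β) / exp β ^ k = exp (2 * a * cosh β - β) ^ k := by
  rw [← exp_nat_mul, ← exp_nat_mul, ← exp_sub, cosh_eq, exp_neg]
  congr 1
  field_simp
  ring

lemma tendsto_mZ_mul_nhds_zero {a β : ℝ} (ha : 0 ≤ a) (h : 2 * a * cosh β < β) :
    Tendsto (fun k : ℕ => mZ k (a * k)) atTop (nhds 0) := by
  have hr : Tendsto (fun k : ℕ => exp (2 * a * cosh β - β) ^ k) atTop (nhds 0) :=
    tendsto_pow_atTop_nhds_zero_of_lt_one (exp_pos _).le (exp_lt_one_iff.mpr (by linarith))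
  refine tendsto_of_tendsto_of_tendsto_of_le_of_le tendsto_const_nhds hr
    (fun k => mZ_nonneg k (by positivity)) fun k => ?_
  rw [← exp_div_exp_add_mul_exp_div_pow]
  exact mZ_le_exp_div_pow k (by positivity) (exp_pos β)

lemma exp_pow_le_mZ_mul {a β : ℝ} {k : ℕ} (ha : 2 * a * sinh β = 1) (hk : 1 ≤ a * k / exp β) :
    exp (2 * a * cosh β - β) ^ k ≤ 4 * exp 4 * (a * k * exp β) ^ 2 * mZ k (a * k) := by
  have hkt : a * k * exp β = a * k / exp β + k := by
    rw [sinh_eq, exp_neg] at ha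
    field_simp at ha ⊢
    linear_combination k * ha
  rw [← exp_div_exp_add_mul_exp_div_pow]
  exact exp_div_pow_le_mZ (exp_pos β) hkt hk

lemma tendsto_mZ_mul_atTop {a β : ℝ} (hβ : 0 < β) (hcoth : β < cosh β / sinh β)
    (ha : 1 ≤ 2 * a * sinh β) : Tendsto (fun k : ℕ => mZ k (a * k)) atTop atTop := by
  have hsinh : 0 < sinh β := sinh_pos_iff.mpr hβ
  obtain ⟨a₀, ha₀sinh⟩ : ∃ a₀, 2 * a₀ * sinh β = 1 := ⟨(2 * sinh β)⁻¹, by field_simp⟩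
  have ha₀ : 0 < a₀ := by nlinarith
  have ha₀a : a₀ ≤ a := le_of_mul_le_mul_right (by linarith) (by positivity : 0 < 2 * sinh β)
  have hc : 0 < 2 * a₀ * cosh β - β := by
    rw [show 2 * a₀ * cosh β = cosh β / sinh β by
      rw [eq_div_iff hsinh.ne']; linear_combination cosh β * ha₀sinh]
    linarith
  set C := 4 * exp 4 * (a₀ * exp β) ^ 2
  have hC : 0 < C := by positivity
  have hlow : ∀ᶠ k : ℕ in atTop, exp ((2 * a₀ * cosh β - β) * k) / k ^ 2 / C ≤ mZ k (a * k) := by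
    have hlarge : Tendsto (fun k : ℕ => a₀ * k / exp β) atTop atTop :=
      (tendsto_natCast_atTop_atTop.const_mul_atTop ha₀).atTop_div_const (exp_pos β)
    filter_upwards [hlarge.eventually_ge_atTop 1, eventually_gt_atTop 0] with k hk hk0
    have hmono : mZ k (a₀ * k) ≤ mZ k (a * k) :=
      mZ_mono k (Set.mem_Ici.mpr (by positivity))
        (Set.mem_Ici.mpr (by positivity [ha₀.trans_le ha₀a])) (by gcongr)
    rw [div_div, div_le_iff₀ (by positivity), mul_comm, exp_nat_mul]
    calc exp (2 * a₀ * cosh β - β) ^ k ≤ 4 * exp 4 * (a₀ * k * exp β) ^ 2 * mZ k (a₀ * k) :=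
          exp_pow_le_mZ_mul ha₀sinh hk
      _ ≤ mZ k (a * k) * (k ^ 2 * C) := by
          rw [show 4 * exp 4 * (a₀ * k * exp β) ^ 2 = k ^ 2 * C by ring, mul_comm]
          gcongr
  refine tendsto_atTop_mono' atTop hlow (Tendsto.atTop_div_const hC ?_)
  have := (tendsto_exp_mul_div_rpow_atTop 2 _ hc).comp tendsto_natCast_atTop_atTop
  simpa [Function.comp_def, Real.rpow_two] using this

lemma cosh_div_sinh_lt_cosh_div_sinh {α β : ℝ} (hβ : 0 < β) (hβα : β < α) :
    cosh α / sinh α < cosh β / sinh β := by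
  rw [div_lt_div_iff₀ (sinh_pos_iff.mpr (hβ.trans hβα)) (sinh_pos_iff.mpr hβ)]
  have : 0 < sinh (α - β) := sinh_pos_iff.mpr (sub_pos.mpr hβα)
  rw [sinh_sub] at this
  linarith

section Critical

variable {α a : ℝ}

lemma tendsto_mZ_mul_nhds_zero_of_coth (hα : 0 < α) (hcoth : cosh α / sinh α = α) (ha0 : 0 ≤ a)
    (ha : 2 * a * sinh α < 1) :
    Tendsto (fun k : ℕ => mZ k (a * k)) atTop (nhds 0) := by
  have hcosh : cosh α = α * sinh α := (div_eq_iff (sinh_pos_iff.mpr hα).ne').mp hcoth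
  refine tendsto_mZ_mul_nhds_zero (β := α) ha0 ?_
  rw [hcosh, show 2 * a * (α * sinh α) = 2 * a * sinh α * α by ring]
  exact mul_lt_of_lt_one_left hα ha

lemma tendsto_mZ_mul_atTop_of_coth (hα : 0 < α) (hcoth : cosh α / sinh α = α)
    (ha : 1 < 2 * a * sinh α) :
    Tendsto (fun k : ℕ => mZ k (a * k)) atTop atTop := by
  have hsinh : 0 < sinh α := sinh_pos_iff.mpr hα
  have ha0 : 0 < a := by nlinarith
  set β := arsinh (2 * a)⁻¹
  have hβsinh : 2 * a * sinh β = 1 := by rw [sinh_arsinh]; field_simp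
  have hβ : 0 < β := arsinh_pos_iff.mpr (by positivity)
  have hβα : β < α := sinh_lt_sinh.mp (by nlinarith)
  refine tendsto_mZ_mul_atTop hβ ?_ hβsinh.ge
  linarith [cosh_div_sinh_lt_cosh_div_sinh hβ hβα]

lemma sqrt_sq_sub_one_mul_sinh (hα : 0 < α) (hcoth : cosh α / sinh α = α) :
    √(α ^ 2 - 1) * sinh α = 1 := by
  have hsinh : 0 < sinh α := sinh_pos_iff.mpr hα
  have hcosh : cosh α = α * sinh α := (div_eq_iff hsinh.ne').mp hcoth
  have h : (α ^ 2 - 1) * sinh α ^ 2 = 1 := by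
    have := cosh_sq α
    rw [hcosh] at this
    linear_combination this
  have hα1 : 0 ≤ α ^ 2 - 1 := by nlinarith
  have hsq : (√(α ^ 2 - 1) * sinh α) ^ 2 = 1 := by rw [mul_pow, sq_sqrt hα1, h]
  exact (pow_eq_one_iff_of_nonneg (by positivity) two_ne_zero).mp hsq

end Critical

lemma tendsto_crossing_div {f : ℕ → ℝ → ℝ} {τ : ℕ → ℝ} {c : ℝ} (hc : 0 ≤ c)
    (hf : ∀ k, MonotoneOn (f k) (Set.Ici 0))
    (hτ : ∀ k : ℕ, 1 ≤ k → 0 < τ k ∧ f k (τ k) = 1)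
    (hsub : ∀ a, 0 < a → a < c → ∀ᶠ k : ℕ in atTop, f k (a * k) < 1)
    (hsup : ∀ a, c < a → ∀ᶠ k : ℕ in atTop, 1 < f k (a * k)) :
    Tendsto (fun k : ℕ => τ k / k) atTop (nhds c) := by
  refine tendsto_order.mpr ⟨fun a hac => ?_, fun a hca => ?_⟩
  · rcases le_or_gt a 0 with ha | ha
    · filter_upwards [eventually_ge_atTop 1] with k hk
      have := (hτ k hk).1
      exact ha.trans_lt (by positivity)
    filter_upwards [hsub a ha hac, eventually_ge_atTop 1] with k hlt hk
    obtain ⟨hpos, hone⟩ := hτ k hk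
    rw [lt_div_iff₀ (by positivity)]
    by_contra! hle
    linarith [hf k (Set.mem_Ici.mpr hpos.le) (Set.mem_Ici.mpr (by positivity)) hle]
  · filter_upwards [hsup a hca, eventually_ge_atTop 1] with k hgt hk
    obtain ⟨hpos, hone⟩ := hτ k hk
    have ha : 0 < a := hc.trans_lt hca
    rw [div_lt_iff₀ (by positivity)]
    by_contra! hle
    linarith [hf k (Set.mem_Ici.mpr (by positivity)) (Set.mem_Ici.mpr hpos.le) hle]

theorem critical_time_Z_asymptotics_general
    (tk : ℕ → ℝ) (htk : ∀ k : ℕ, 1 ≤ k → 0 < tk k ∧ mZ k (tk k) = 1)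
    (αs : ℝ) (hαs1 : 1 < αs) (hαs : Real.cosh αs / Real.sinh αs = αs) :
    Tendsto (fun k : ℕ => tk k / k) atTop
      (nhds (Real.sqrt (αs ^ 2 - 1) / 2)) ∧
    (∀ a : ℝ, 0 ≤ a → a < Real.sqrt (αs ^ 2 - 1) / 2 →
      Tendsto (fun k : ℕ => mZ k (a * k)) atTop (nhds 0)) ∧
    (∀ a : ℝ, Real.sqrt (αs ^ 2 - 1) / 2 < a →
      Tendsto (fun k : ℕ => mZ k (a * k)) atTop atTop) := by
  have hα : 0 < αs := by linarith
  have hcrit := sqrt_sq_sub_one_mul_sinh hα hαs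
  have hsinh : 0 < sinh αs := sinh_pos_iff.mpr hα
  have hsub : ∀ a : ℝ, 0 ≤ a → a < √(αs ^ 2 - 1) / 2 →
      Tendsto (fun k : ℕ => mZ k (a * k)) atTop (nhds 0) := fun a ha0 ha =>
    tendsto_mZ_mul_nhds_zero_of_coth hα hαs ha0 (by nlinarith)
  have hsup : ∀ a : ℝ, √(αs ^ 2 - 1) / 2 < a →
      Tendsto (fun k : ℕ => mZ k (a * k)) atTop atTop := fun a ha =>
    tendsto_mZ_mul_atTop_of_coth hα hαs (by nlinarith)
  refine ⟨tendsto_crossing_div (by positivity) mZ_mono htk (fun a ha0 ha => ?_)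
    (fun a ha => (hsup a ha).eventually_gt_atTop 1), hsub, hsup⟩
  exact (hsub a ha0.le ha).eventually_lt_const one_pos

/-- Let `t*_k` be the unique `t > 0` with `m_ℤ(0,k,t) = 1`, and let
`α*` be the unique solution in `(1,∞)` of `coth α = α`. Then `t*_k/k → (1/2)√(α*²−1)`
as `k → ∞`; equivalently, for `a ≥ 0`, `m_ℤ(0,k,ak) → 0` if `a < (1/2)√(α*²−1)` and
`m_ℤ(0,k,ak) → ∞` if `a > (1/2)√(α*²−1)`. -/
theorem critical_time_Z_asymptotics
    (tk : ℕ → ℝ) (htk : ∀ k : ℕ, 1 ≤ k → 0 < tk k ∧ mZ k (tk k) = 1)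
    (htkuniq : ∀ k : ℕ, 1 ≤ k → ∀ t : ℝ, 0 < t → mZ k t = 1 → t = tk k)
    (αs : ℝ) (hαs1 : 1 < αs) (hαs : Real.cosh αs / Real.sinh αs = αs) :
    Tendsto (fun k : ℕ => tk k / k) atTop
      (nhds (Real.sqrt (αs ^ 2 - 1) / 2)) ∧
    (∀ a : ℝ, 0 ≤ a → a < Real.sqrt (αs ^ 2 - 1) / 2 →
      Tendsto (fun k : ℕ => mZ k (a * k)) atTop (nhds 0)) ∧
    (∀ a : ℝ, Real.sqrt (αs ^ 2 - 1) / 2 < a →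
      Tendsto (fun k : ℕ => mZ k (a * k)) atTop atTop) :=
  critical_time_Z_asymptotics_general tk htk αs hαs1 hαs
end

section
/- Let T(n,1) denote the first-passage time between two vertices at Hamming distance 1 in the hypercube K₂^n, with i.i.d. Exp(1) edge weights. Then E[T(n,1)] = O(n^{−1/3}); that is, there is a constant C > 0 such that E[T(n,1)] ≤ C·n^{−1/3} for all n ≥ 1. -/
/-!
Flip coordinate `i` of `x` to get the neighbour `x'`. Besides the edge `x x'`, for every other
coordinate `k` the detour `x → xᵏ → xᵏⁱ → x'` has length three, and these `n` paths are pairwise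
edge-disjoint, so their passage times are independent. A sum of `m` i.i.d. `Exp(1)` variables
exceeds `t` only if one summand exceeds `t / m`; hence `P(T > t) ≤ e^{-t} q(t)^{n-1}` with
`q(t) = 1 - (1 - e^{-t/3})³ ≤ exp(-t³/216)` for `t ≤ 3`. So `T` is rarely larger than `n^{-1/3}`,
and integrating the tail gives `E T = O(n^{-1/3})`.
-/

open MeasureTheory ProbabilityTheory Filter
open scoped ProbabilityTheory ENNReal

namespace FPP

variable {V : Type*}

/-- `G` has all vertex degrees bounded by `D`. -/
def BoundedDegreeBy (G : SimpleGraph V) (D : ℕ) : Prop :=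
  ∀ x : V, (G.neighborSet x).Finite ∧ (G.neighborSet x).ncard ≤ D

/-- The path-generating function `m_G(v,w,t) = Σ_γ t^{|γ|}/|γ|!`,
summing over all walks from `v` to `w` in `G`. -/
noncomputable def genFun (G : SimpleGraph V) (v w : V) (t : ℝ) : ℝ :=
  ∑' γ : G.Walk v w, t ^ γ.length / (Nat.factorial γ.length)

/-- The passage time of a walk, given edge weights `ω` (edges counted with multiplicity). -/
noncomputable def walkTime (G : SimpleGraph V) (ω : G.edgeSet → ℝ) {v w : V}
    (γ : G.Walk v w) : ℝ :=
  (γ.darts.map (fun d => ω ⟨d.edge, d.edge_mem⟩)).sum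

/-- The first-passage time between `v` and `w`, given edge weights `ω`:
the infimum of walk passage times over all walks from `v` to `w`. -/
noncomputable def fppTime (G : SimpleGraph V) (ω : G.edgeSet → ℝ) (v w : V) : ℝ :=
  ⨅ γ : G.Walk v w, walkTime G ω γ

/-- The function `f_G^{vw}(s,t)` (the critical time `tstar` is given as a parameter);
note that `Real.log 0 = 0` in Lean, so terms `0 · ln 0` are interpreted as `0`. -/
noncomputable def fFun (G : SimpleGraph V) (v w : V) (tstar s t : ℝ) : ℝ :=
  ∑' p : V × V, genFun G v p.1 s * genFun G p.1 p.2 t *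
    genFun G p.2 w (tstar - s - t) * Real.log (genFun G p.1 p.2 t)

/-- The `n`-fold Cartesian (box) power of a simple graph: vertices are `n`-tuples,
adjacent iff they agree in all but one coordinate and are adjacent in that coordinate. -/
def cartPower (G : SimpleGraph V) (n : ℕ) : SimpleGraph (Fin n → V) where
  Adj x y := ∃ i, G.Adj (x i) (y i) ∧ ∀ j, j ≠ i → x j = y j
  symm := by
    constructor
    rintro x y ⟨i, h, hj⟩
    exact ⟨i, h.symm, fun j hji => (hj j hji).symm⟩
  loopless := by
    constructor
    rintro x ⟨i, h, -⟩
    exact G.loopless.irrefl _ h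

open Set Function

section Independence

variable {Ω : Type*} {mΩ : MeasurableSpace Ω} {P : Measure Ω}

theorem _root_.ProbabilityTheory.iIndepFun.curry {ι : Type*} {κ : ι → Type*}
    {𝓧 : (i : ι) → κ i → Type*} {m𝓧 : ∀ i j, MeasurableSpace (𝓧 i j)}
    {X : (p : (i : ι) × κ i) → Ω → 𝓧 p.1 p.2}
    (mX : ∀ p, Measurable (X p)) (h : iIndepFun X P) :
    iIndepFun (fun i ω j ↦ X ⟨i, j⟩ ω) P := by
  have := h.isProbabilityMeasure
  have : ∀ p, IsProbabilityMeasure (P.map (X p)) :=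
    fun p ↦ Measure.isProbabilityMeasure_map (mX p).aemeasurable
  have hblock (i : ι) : iIndepFun (fun j ↦ X ⟨i, j⟩) P := h.precomp sigma_mk_injective
  rw [iIndepFun_iff_map_fun_eq_infinitePi_map (fun i ↦ by fun_prop)]
  have hcurry : (fun ω i j ↦ X ⟨i, j⟩ ω) = MeasurableEquiv.piCurry 𝓧 ∘ fun ω p ↦ X p ω := by
    ext; simp [Sigma.curry]
  rw [hcurry, ← Measure.map_map (by fun_prop) (by fun_prop),
    (iIndepFun_iff_map_fun_eq_infinitePi_map mX).1 h]
  refine (Measure.infinitePi_map_piCurry fun i j ↦ P.map (X ⟨i, j⟩)).trans ?_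
  congr 1
  ext1 i
  exact ((iIndepFun_iff_map_fun_eq_infinitePi_map (fun j ↦ mX _)).1 (hblock i)).symm

theorem _root_.ProbabilityTheory.iIndepFun.finsetSum_of_pairwiseDisjoint {ι J : Type*}
    {X : ι → Ω → ℝ} (hX : iIndepFun X P) (mX : ∀ i, Measurable (X i)) {S : J → Finset ι}
    (hS : Pairwise (Disjoint on S)) :
    iIndepFun (fun j ω ↦ ∑ i ∈ S j, X i ω) P := by
  have hinj : Function.Injective (fun p : (j : J) × S j ↦ (p.2 : ι)) := by
    rintro ⟨j, i, hi⟩ ⟨j', i', hi'⟩ (rfl : i = i')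
    obtain rfl : j = j' := by
      by_contra hne
      exact Finset.disjoint_left.1 (hS hne) hi hi'
    rfl
  have hblocks := (hX.precomp hinj).curry (𝓧 := fun _ _ ↦ ℝ) (fun p ↦ mX _)
  convert hblocks.comp (fun j v ↦ ∑ i, v i) (fun j ↦ by fun_prop) using 2 with j
  exact funext fun ω ↦ (Finset.sum_coe_sort (S j) (X · ω)).symm

lemma expMeasure_one_Iic {x : ℝ} (hx : 0 ≤ x) :
    expMeasure 1 (Iic x) = ENNReal.ofReal (1 - Real.exp (-x)) := by
  have := isProbabilityMeasure_expMeasure one_pos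
  rw [← ofReal_cdf, cdf_expMeasure_eq one_pos, if_pos hx, one_mul]

lemma expMeasure_one_Iio_zero : expMeasure 1 (Iio 0) = 0 := by
  rw [expMeasure, gammaMeasure, withDensity_apply _ measurableSet_Iio]
  exact lintegral_exponentialPDF_of_nonpos le_rfl

lemma ae_forall_nonneg_of_map_eq_expMeasure {ι : Type*} [Countable ι] {X : ι → Ω → ℝ}
    (mX : ∀ i, Measurable (X i)) (hlaw : ∀ i, P.map (X i) = expMeasure 1) :
    ∀ᵐ ω ∂P, ∀ i, 0 ≤ X i ω := by
  refine ae_all_iff.2 fun i ↦ measure_mono_null (fun ω hω ↦ ?_)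
    (by rw [← Measure.map_apply (mX i) measurableSet_Iio, hlaw, expMeasure_one_Iio_zero])
  simpa using hω

noncomputable def expSumTailBound (k : ℕ) (s : ℝ) : ℝ := 1 - (1 - Real.exp (-(s / k))) ^ k

theorem measure_lt_finsetSum_le {ι : Type*} {X : ι → Ω → ℝ} (hX : iIndepFun X P)
    (mX : ∀ i, Measurable (X i)) (hlaw : ∀ i, P.map (X i) = expMeasure 1) (S : Finset ι)
    {s : ℝ} (hs : 0 ≤ s) :
    P {ω | s < ∑ i ∈ S, X i ω} ≤ ENNReal.ofReal (expSumTailBound S.card s) := by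
  have := hX.isProbabilityMeasure
  set k := S.card
  set p := 1 - Real.exp (-(s / k))
  have hp : 0 ≤ p := by
    simp only [p, sub_nonneg, Real.exp_le_one_iff, neg_nonpos]
    positivity
  have hsub : {ω | s < ∑ i ∈ S, X i ω} ⊆ (⋂ i ∈ S, X i ⁻¹' Iic (s / k))ᶜ := by
    intro ω hω hall
    have hsum : ∑ i ∈ S, X i ω ≤ k * (s / k) := by
      simpa using Finset.sum_le_card_nsmul S (X · ω) (s / k) (by simpa using hall)
    have : (k : ℝ) * (s / k) ≤ s := by
      rcases Nat.eq_zero_or_pos k with hk | hk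
      · simp [hk, hs]
      · rw [mul_div_cancel₀ _ (by positivity)]
    exact (hω.trans_le (hsum.trans this)).false
  have hinter : P (⋂ i ∈ S, X i ⁻¹' Iic (s / k)) = ENNReal.ofReal (p ^ k) := by
    rw [hX.meas_biInter fun i _ ↦ ⟨Iic (s / k), measurableSet_Iic, rfl⟩,
      ENNReal.ofReal_pow hp, ← Finset.prod_const]
    refine Finset.prod_congr rfl fun i _ ↦ ?_
    rw [← Measure.map_apply (mX i) measurableSet_Iic, hlaw, expMeasure_one_Iic (by positivity)]
  calc P {ω | s < ∑ i ∈ S, X i ω} ≤ P (⋂ i ∈ S, X i ⁻¹' Iic (s / k))ᶜ := measure_mono hsub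
    _ = ENNReal.ofReal (expSumTailBound k s) := by
      rw [prob_compl_eq_one_sub (Finset.measurableSet_biInter _ fun i _ ↦ mX i measurableSet_Iic),
        hinter, expSumTailBound, ENNReal.ofReal_sub _ (by positivity), ENNReal.ofReal_one]

end Independence

section Walks

variable {G : SimpleGraph V} {v w : V}

lemma walkTime_nonneg {ω : G.edgeSet → ℝ} (hω : ∀ e, 0 ≤ ω e) (γ : G.Walk v w) :
    0 ≤ walkTime G ω γ :=
  List.sum_nonneg fun _ hx ↦ by
    obtain ⟨d, -, rfl⟩ := List.mem_map.1 hx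
    exact hω _

lemma fppTime_le_walkTime {ω : G.edgeSet → ℝ} (hω : ∀ e, 0 ≤ ω e) (γ : G.Walk v w) :
    fppTime G ω v w ≤ walkTime G ω γ :=
  ciInf_le ⟨0, by rintro _ ⟨γ', rfl⟩; exact walkTime_nonneg hω γ'⟩ γ

def walkEdges (γ : G.Walk v w) : List G.edgeSet :=
  γ.darts.map fun d ↦ ⟨d.edge, d.edge_mem⟩

lemma mem_walkEdges {γ : G.Walk v w} {e : G.edgeSet} :
    e ∈ walkEdges γ ↔ (e : Sym2 V) ∈ γ.edges := by
  simp [walkEdges, SimpleGraph.Walk.edges, Subtype.ext_iff]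

lemma walkEdges_nodup {γ : G.Walk v w} (hγ : γ.IsTrail) : (walkEdges γ).Nodup :=
  List.Nodup.of_map Subtype.val (by rw [walkEdges, List.map_map]; exact hγ.edges_nodup)

lemma walkTime_eq_sum_walkEdges [DecidableEq V] {γ : G.Walk v w} (hγ : γ.IsTrail)
    (ω : G.edgeSet → ℝ) : walkTime G ω γ = ∑ e ∈ (walkEdges γ).toFinset, ω e := by
  rw [List.sum_toFinset _ (walkEdges_nodup hγ), walkEdges, List.map_map]
  rfl

lemma card_walkEdges_toFinset [DecidableEq V] {γ : G.Walk v w} (hγ : γ.IsTrail) :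
    (walkEdges γ).toFinset.card = γ.length := by
  rw [List.toFinset_card_of_nodup (walkEdges_nodup hγ), walkEdges, List.length_map,
    SimpleGraph.Walk.length_darts]

end Walks

section Trails

variable [DecidableEq V] {G : SimpleGraph V} {v w : V} {Ω J : Type*} [Fintype J]
  [MeasurableSpace Ω] {P : Measure Ω} (γ : J → G.Walk v w) (hγ : ∀ j, (γ j).IsTrail)
  (hdisj : Pairwise (Disjoint on fun j ↦ (walkEdges (γ j)).toFinset))
  {T : G.edgeSet → Ω → ℝ} (mT : ∀ e, Measurable (T e)) (hT : iIndepFun T P)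
  (hlaw : ∀ e, P.map (T e) = expMeasure 1)
include hγ hdisj mT hT hlaw

lemma measure_forall_lt_walkTime_le {t : ℝ} (ht : 0 ≤ t) :
    P {ω | ∀ j, t < walkTime G (T · ω) (γ j)} ≤
      ∏ j, ENNReal.ofReal (expSumTailBound (γ j).length t) := by
  simp_rw [walkTime_eq_sum_walkEdges (hγ _), ← card_walkEdges_toFinset (hγ _)]
  rw [show {ω | ∀ j, t < ∑ e ∈ (walkEdges (γ j)).toFinset, T e ω} =
      ⋂ j, (fun ω ↦ ∑ e ∈ (walkEdges (γ j)).toFinset, T e ω) ⁻¹' Ioi t by ext; simp,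
    (hT.finsetSum_of_pairwiseDisjoint mT hdisj).meas_iInter
      fun j ↦ ⟨Ioi t, measurableSet_Ioi, rfl⟩]
  exact Finset.prod_le_prod' fun j _ ↦ measure_lt_finsetSum_le hT mT hlaw _ ht

theorem lintegral_fppTime_le [Countable V] [Nonempty J] :
    ∫⁻ ω, ENNReal.ofReal (fppTime G (T · ω) v w) ∂P ≤
      ∫⁻ t in Ioi 0, ∏ j, ENNReal.ofReal (expSumTailBound (γ j).length t) := by
  set M : Ω → ℝ := Finset.univ.inf' Finset.univ_nonempty fun j ω ↦ walkTime G (T · ω) (γ j)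
  have hM (ω : Ω) : M ω = Finset.univ.inf' Finset.univ_nonempty
      fun j ↦ walkTime G (T · ω) (γ j) := Finset.inf'_apply ..
  have mM : Measurable M := Finset.inf'_induction _ _ (fun _ hf _ hg ↦ hf.inf hg) fun j _ ↦ by
    simp_rw [walkTime_eq_sum_walkEdges (hγ j)]
    fun_prop
  have hT_nonneg := ae_forall_nonneg_of_map_eq_expMeasure mT hlaw
  calc ∫⁻ ω, ENNReal.ofReal (fppTime G (T · ω) v w) ∂P ≤ ∫⁻ ω, ENNReal.ofReal (M ω) ∂P := by
        refine lintegral_mono_ae ?_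
        filter_upwards [hT_nonneg] with ω hω
        exact ENNReal.ofReal_le_ofReal <|
          (hM ω).symm ▸ Finset.le_inf' _ _ fun j _ ↦ fppTime_le_walkTime hω _
    _ = ∫⁻ t in Ioi 0, P {ω | t < M ω} := by
        refine lintegral_eq_lintegral_meas_lt P ?_ mM.aemeasurable
        filter_upwards [hT_nonneg] with ω hω
        exact (hM ω).symm ▸ Finset.le_inf' _ _ fun j _ ↦ walkTime_nonneg hω _
    _ ≤ ∫⁻ t in Ioi 0, ∏ j, ENNReal.ofReal (expSumTailBound (γ j).length t) := by
        refine setLIntegral_mono' measurableSet_Ioi fun t ht ↦ ?_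
        simp only [hM, Finset.lt_inf'_iff, Finset.mem_univ, true_implies]
        exact measure_forall_lt_walkTime_le γ hγ hdisj mT hT hlaw (le_of_lt ht)

end Trails

section CartPower

variable {G : SimpleGraph V} {n : ℕ} {x : Fin n → V} {i k : Fin n} {a b : V}

lemma cartPower_adj_update (h : G.Adj (x i) a) : (cartPower G n).Adj x (update x i a) :=
  ⟨i, by simpa using h, fun j hj ↦ by simp [hj]⟩

lemma cartPower_adj_update_update (hki : k ≠ i) (hb : G.Adj (x k) b) :
    (cartPower G n).Adj (update (update x k b) i a) (update x i a) := by
  rw [update_comm hki]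
  exact (cartPower_adj_update (by simpa [hki] using hb)).symm

def cartPowerDetour (ha : G.Adj (x i) a) (hki : k ≠ i) (hb : G.Adj (x k) b) :
    (cartPower G n).Walk x (update x i a) :=
  .cons (cartPower_adj_update hb) <|
    .cons (cartPower_adj_update (by simpa [Ne.symm hki] using ha)) <|
    .cons (cartPower_adj_update_update hki hb) .nil

lemma cartPowerDetour_isPath (ha : G.Adj (x i) a) (hki : k ≠ i) (hb : G.Adj (x k) b) :
    (cartPowerDetour ha hki hb).IsPath := by
  have hne : ∀ y z : Fin n → V, ∀ l, y l ≠ z l → y ≠ z := fun y z l h e ↦ h (congrFun e l)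
  simp only [cartPowerDetour, SimpleGraph.Walk.cons_isPath_iff, SimpleGraph.Walk.support_cons,
    SimpleGraph.Walk.support_nil, List.mem_cons, List.not_mem_nil, SimpleGraph.Walk.IsPath.nil,
    not_or, true_and, or_false]
  refine ⟨⟨hne _ _ k ?_, hne _ _ i ?_, hne _ _ k ?_⟩, hne _ _ k ?_, hne _ _ k ?_, hne _ _ i ?_⟩ <;>
    simp [hki, hki.symm, hb.ne, hb.ne', ha.ne]

def cartPowerPaths (ha : G.Adj (x i) a) (b : Fin n → V) (hb : ∀ k, k ≠ i → G.Adj (x k) (b k))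
    (k : Fin n) : (cartPower G n).Walk x (update x i a) :=
  if hki : k = i then (cartPower_adj_update ha).toWalk else cartPowerDetour ha hki (hb k hki)

variable (ha : G.Adj (x i) a) {b : Fin n → V} (hb : ∀ k, k ≠ i → G.Adj (x k) (b k))
include ha hb

lemma cartPowerPaths_isTrail (k : Fin n) : (cartPowerPaths ha b hb k).IsTrail := by
  unfold cartPowerPaths
  split_ifs with hki
  · simp
  · exact (cartPowerDetour_isPath ha hki _).isTrail

lemma length_cartPowerPaths (k : Fin n) :
    (cartPowerPaths ha b hb k).length = if k = i then 1 else 3 := by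
  unfold cartPowerPaths
  split_ifs <;> rfl

lemma eq_of_mem_support_cartPowerPaths {k : Fin n} {y : Fin n → V}
    (hy : y ∈ (cartPowerPaths ha b hb k).support) {l : Fin n} (hli : l ≠ i) (hlk : l ≠ k) :
    y l = x l := by
  unfold cartPowerPaths cartPowerDetour at hy
  split_ifs at hy <;>
    simp only [SimpleGraph.Walk.support_cons, SimpleGraph.Walk.support_nil, List.mem_cons,
      List.not_mem_nil, or_false] at hy <;>
    rcases hy with rfl | rfl | rfl | rfl <;> simp [hli, hlk]

lemma exists_ne_of_mem_edges_cartPowerPaths {k : Fin n} {e : Sym2 (Fin n → V)}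
    (he : e ∈ (cartPowerPaths ha b hb k).edges) : ∃ y z, e = s(y, z) ∧ y k ≠ x k := by
  unfold cartPowerPaths cartPowerDetour at he
  split_ifs at he with hki
  · subst hki
    simp only [SimpleGraph.Walk.edges_cons, SimpleGraph.Walk.edges_nil, List.mem_singleton] at he
    exact ⟨_, _, he.trans Sym2.eq_swap, by simpa using ha.ne'⟩
  · simp only [SimpleGraph.Walk.edges_cons, SimpleGraph.Walk.edges_nil, List.mem_cons,
      List.not_mem_nil, or_false] at he
    have hb' := (hb k hki).ne'
    rcases he with rfl | rfl | rfl
    · exact ⟨_, _, Sym2.eq_swap, by simpa using hb'⟩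
    · exact ⟨_, _, rfl, by simpa using hb'⟩
    · exact ⟨_, _, rfl, by simpa [hki] using hb'⟩

lemma not_mem_edges_cartPowerPaths {k k' : Fin n} (hkk' : k ≠ k') (hki : k ≠ i)
    {e : Sym2 (Fin n → V)} (he : e ∈ (cartPowerPaths ha b hb k).edges) :
    e ∉ (cartPowerPaths ha b hb k').edges := fun he' ↦ by
  obtain ⟨y, z, rfl, hy⟩ := exists_ne_of_mem_edges_cartPowerPaths ha hb he
  exact hy <| eq_of_mem_support_cartPowerPaths ha hb
    ((cartPowerPaths ha b hb k').fst_mem_support_of_mem_edges he') hki hkk'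

lemma pairwise_disjoint_cartPowerPaths [DecidableEq V] :
    Pairwise (Disjoint on fun k ↦ (walkEdges (cartPowerPaths ha b hb k)).toFinset) := by
  intro k k' hkk'
  rw [Function.onFun, Finset.disjoint_left]
  intro e he he'
  rw [List.mem_toFinset, mem_walkEdges] at he he'
  by_cases hki : k = i
  · exact not_mem_edges_cartPowerPaths ha hb hkk'.symm (hki ▸ hkk'.symm) he' he
  · exact not_mem_edges_cartPowerPaths ha hb hkk' hki he he'

theorem lintegral_fppTime_cartPower_le [Countable V] [DecidableEq V] {Ω : Type*}
    [MeasurableSpace Ω] {P : Measure Ω} {T : (cartPower G n).edgeSet → Ω → ℝ}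
    (mT : ∀ e, Measurable (T e)) (hT : iIndepFun T P) (hlaw : ∀ e, P.map (T e) = expMeasure 1) :
    ∫⁻ ω, ENNReal.ofReal (fppTime (cartPower G n) (T · ω) x (update x i a)) ∂P ≤
      ∫⁻ t in Ioi 0, ENNReal.ofReal (expSumTailBound 1 t) *
        ENNReal.ofReal (expSumTailBound 3 t) ^ (n - 1) := by
  have : Nonempty (Fin n) := ⟨i⟩
  refine (lintegral_fppTime_le _ (cartPowerPaths_isTrail ha hb)
    (pairwise_disjoint_cartPowerPaths ha hb) mT hT hlaw).trans_eq
    (setLIntegral_congr_fun measurableSet_Ioi fun t _ ↦ ?_)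
  rw [Fintype.prod_eq_mul_prod_compl i, Finset.prod_congr rfl fun k hk ↦ by
    rw [length_cartPowerPaths, if_neg (Finset.mem_compl.1 hk ∘ Finset.mem_singleton.2)],
    Finset.prod_const, Finset.card_compl, Finset.card_singleton, Fintype.card_fin,
    length_cartPowerPaths, if_pos rfl]

end CartPower

lemma expSumTailBound_one (s : ℝ) : expSumTailBound 1 s = Real.exp (-s) := by
  simp [expSumTailBound]

lemma expSumTailBound_nonneg (k : ℕ) {s : ℝ} (hs : 0 ≤ s) : 0 ≤ expSumTailBound k s := by
  have : Real.exp (-(s / k)) ≤ 1 := Real.exp_le_one_iff.2 (by simp only [neg_nonpos]; positivity)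
  simpa [expSumTailBound] using pow_le_one₀ (by linarith) (by linarith [Real.exp_pos (-(s / k))])

lemma expSumTailBound_anti (k : ℕ) {s s' : ℝ} (hs : 0 ≤ s) (hss' : s ≤ s') :
    expSumTailBound k s' ≤ expSumTailBound k s := by
  have : Real.exp (-(s / k)) ≤ 1 := Real.exp_le_one_iff.2 (by simp only [neg_nonpos]; positivity)
  unfold expSumTailBound
  gcongr

lemma expSumTailBound_three_le {s : ℝ} (hs : 0 ≤ s) (hs3 : s ≤ 3) :
    expSumTailBound 3 s ≤ Real.exp (-(s ^ 3 / 216)) := by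
  have hexp : Real.exp (-(s / 3)) ≤ 1 - s / 6 := by
    rw [Real.exp_neg, inv_le_iff_one_le_mul₀ (Real.exp_pos _)]
    nlinarith [Real.add_one_le_exp (s / 3)]
  have : (s / 6) ^ 3 ≤ (1 - Real.exp (-(s / 3))) ^ 3 := by gcongr; linarith
  calc expSumTailBound 3 s ≤ 1 - s ^ 3 / 216 := by
        unfold expSumTailBound; push_cast; nlinarith
    _ ≤ Real.exp (-(s ^ 3 / 216)) := by linarith [Real.add_one_le_exp (-(s ^ 3 / 216))]

/-- The cubic bound only holds up to `3`, hence `s = min t 3`; then `x ≤ x³ + 1` trades the cubic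
decay `exp (-(d s)³)` for `e · exp (-d s)`, whose integral is of order `1 / d`. -/
lemma expSumTailBound_three_pow_le {m : ℕ} {d t : ℝ} (hd : 0 ≤ d) (hdm : d ^ 3 = m / 216)
    (ht : 0 ≤ t) :
    expSumTailBound 3 t ^ m ≤ Real.exp 1 * (Real.exp (-(d * t)) + Real.exp (-(3 * d))) := by
  set s := min t 3
  have hs : 0 ≤ s := le_min ht (by norm_num)
  have hcube : d * s ≤ (d * s) ^ 3 + 1 := by
    have := mul_nonneg hd hs
    nlinarith [mul_nonneg this (sq_nonneg (d * s - 1)), sq_nonneg (d * s - 1)]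
  calc expSumTailBound 3 t ^ m ≤ Real.exp (-(s ^ 3 / 216)) ^ m := by
        gcongr
        · exact expSumTailBound_nonneg 3 ht
        · exact (expSumTailBound_anti 3 hs (min_le_left t 3)).trans
            (expSumTailBound_three_le hs (min_le_right t 3))
    _ = Real.exp (-(d * s) ^ 3) := by
        rw [← Real.exp_nat_mul, mul_pow, hdm]; ring_nf
    _ ≤ Real.exp 1 * Real.exp (-(d * s)) := by
        rw [← Real.exp_add]; gcongr; linarith
    _ ≤ Real.exp 1 * (Real.exp (-(d * t)) + Real.exp (-(3 * d))) := by
        gcongr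
        rcases min_cases t 3 with ⟨h, -⟩ | ⟨h, -⟩ <;> simp only [s, h, mul_comm 3 d] <;>
          linarith [Real.exp_pos (-(d * t)), Real.exp_pos (-(d * 3))]

lemma lintegral_Ioi_exp_neg_mul {b : ℝ} (hb : 0 < b) :
    ∫⁻ t in Ioi 0, ENNReal.ofReal (Real.exp (-(b * t))) = ENNReal.ofReal b⁻¹ := by
  have hint := integrableOn_exp_mul_Ioi (neg_lt_zero.2 hb) 0
  simp only [neg_mul] at hint
  rw [← ofReal_integral_eq_lintegral_ofReal hint (ae_of_all _ fun t ↦ (Real.exp_pos _).le)]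
  have := integral_exp_mul_Ioi (neg_lt_zero.2 hb) 0
  simp only [neg_mul, mul_zero, Real.exp_zero] at this
  rw [this, neg_div_neg_eq, one_div]

lemma cbrt_le_one_add_cbrt_sub_one {n : ℕ} (hn : 1 ≤ n) :
    (n : ℝ) ^ (3⁻¹ : ℝ) ≤ 1 + ((n - 1 : ℕ) : ℝ) ^ (3⁻¹ : ℝ) := by
  have hn' : (n : ℝ) = 1 + ((n - 1 : ℕ) : ℝ) := by push_cast [Nat.cast_sub hn]; ring
  calc (n : ℝ) ^ (3⁻¹ : ℝ) = (1 + ((n - 1 : ℕ) : ℝ)) ^ (3⁻¹ : ℝ) := by rw [hn']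
    _ ≤ 1 ^ (3⁻¹ : ℝ) + ((n - 1 : ℕ) : ℝ) ^ (3⁻¹ : ℝ) :=
      Real.rpow_add_le_add_rpow zero_le_one (Nat.cast_nonneg _) (by norm_num) (by norm_num)
    _ = 1 + ((n - 1 : ℕ) : ℝ) ^ (3⁻¹ : ℝ) := by rw [Real.one_rpow]

lemma exp_one_mul_inv_add_exp_le {c N : ℝ} (hc : 0 ≤ c) (hN : 0 < N) (hNc : N ≤ 1 + c) :
    Real.exp 1 * ((1 + c / 6)⁻¹ + Real.exp (-(3 * (c / 6)))) ≤ 36 * N⁻¹ := by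
  have hexp : Real.exp (-(3 * (c / 6))) ≤ (1 + c / 6)⁻¹ := by
    rw [Real.exp_neg]
    exact inv_anti₀ (by positivity) (by linarith [Real.add_one_le_exp (3 * (c / 6))])
  have hinv : (1 + c / 6)⁻¹ ≤ 6 / N := by
    rw [show (1 + c / 6)⁻¹ = 6 / (6 + c) by field_simp]
    exact div_le_div_of_nonneg_left (by norm_num) hN (by linarith)
  have he : Real.exp 1 ≤ 3 := (Real.exp_one_lt_d9.trans (by norm_num)).le
  calc Real.exp 1 * ((1 + c / 6)⁻¹ + Real.exp (-(3 * (c / 6)))) ≤ 3 * (6 / N + 6 / N) := by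
        gcongr; linarith
    _ = 36 * N⁻¹ := by ring

theorem lintegral_expSumTailBound_le {n : ℕ} (hn : 1 ≤ n) :
    ∫⁻ t in Ioi 0, ENNReal.ofReal (expSumTailBound 1 t) *
        ENNReal.ofReal (expSumTailBound 3 t) ^ (n - 1) ≤
      ENNReal.ofReal (36 * (n : ℝ) ^ (-(1 / 3 : ℝ))) := by
  set c : ℝ := ((n - 1 : ℕ) : ℝ) ^ (3⁻¹ : ℝ)
  set d := c / 6
  have hd : 0 ≤ d := by positivity
  have hdm : d ^ 3 = ((n - 1 : ℕ) : ℝ) / 216 := by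
    rw [div_pow, show c ^ 3 = ((n - 1 : ℕ) : ℝ) from
      mod_cast Real.rpow_inv_natCast_pow (Nat.cast_nonneg _) three_ne_zero]
    norm_num
  have hpointwise (t : ℝ) (ht : 0 ≤ t) :
      ENNReal.ofReal (expSumTailBound 1 t) * ENNReal.ofReal (expSumTailBound 3 t) ^ (n - 1) ≤
        ENNReal.ofReal (Real.exp 1) * (ENNReal.ofReal (Real.exp (-((1 + d) * t))) +
          ENNReal.ofReal (Real.exp (-(3 * d))) * ENNReal.ofReal (Real.exp (-(1 * t)))) := by
    rw [expSumTailBound_one, ← ENNReal.ofReal_pow (expSumTailBound_nonneg 3 ht),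
      ← ENNReal.ofReal_mul (by positivity), ← ENNReal.ofReal_mul (by positivity),
      ← ENNReal.ofReal_add (by positivity) (by positivity), ← ENNReal.ofReal_mul (by positivity)]
    refine ENNReal.ofReal_le_ofReal ?_
    calc Real.exp (-t) * expSumTailBound 3 t ^ (n - 1)
        ≤ Real.exp (-t) * (Real.exp 1 * (Real.exp (-(d * t)) + Real.exp (-(3 * d)))) := by
          gcongr; exact expSumTailBound_three_pow_le hd hdm ht
      _ = _ := by rw [show -((1 + d) * t) = -t + -(d * t) by ring, one_mul, Real.exp_add]; ring
  calc _ ≤ ∫⁻ t in Ioi 0, ENNReal.ofReal (Real.exp 1) *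
        (ENNReal.ofReal (Real.exp (-((1 + d) * t))) +
          ENNReal.ofReal (Real.exp (-(3 * d))) * ENNReal.ofReal (Real.exp (-(1 * t)))) :=
        setLIntegral_mono' measurableSet_Ioi fun t ht ↦ hpointwise t (le_of_lt ht)
    _ = ENNReal.ofReal (Real.exp 1 * ((1 + d)⁻¹ + Real.exp (-(3 * d)))) := by
        rw [lintegral_const_mul' _ _ ENNReal.ofReal_ne_top, lintegral_add_left (by fun_prop),
          lintegral_const_mul' _ _ ENNReal.ofReal_ne_top,
          lintegral_Ioi_exp_neg_mul (by positivity), lintegral_Ioi_exp_neg_mul one_pos, inv_one,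
          ENNReal.ofReal_one, mul_one, ← ENNReal.ofReal_add (by positivity) (by positivity),
          ← ENNReal.ofReal_mul (by positivity)]
    _ ≤ ENNReal.ofReal (36 * (n : ℝ) ^ (-(1 / 3 : ℝ))) := by
        rw [Real.rpow_neg (Nat.cast_nonneg n), one_div]
        exact ENNReal.ofReal_le_ofReal <| exp_one_mul_inv_add_exp_le (by positivity)
          (by positivity) (cbrt_le_one_add_cbrt_sub_one hn)

theorem hypercube_distance_one_expectation_general
    (Ω : ℕ → Type*) [∀ n, MeasureSpace (Ω n)]
    (T : ∀ n, (cartPower (⊤ : SimpleGraph Bool) n).edgeSet → Ω n → ℝ)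
    (hmeas : ∀ n e, Measurable (T n e))
    (hindep : ∀ n, iIndepFun (β := fun _ => ℝ) (m := fun _ => Real.measurableSpace) (T n) ℙ)
    (hdist : ∀ n e, Measure.map (T n e) ℙ = expMeasure 1) :
    ∃ C : ℝ, 0 < C ∧ ∀ n : ℕ, 1 ≤ n →
      ∫⁻ ω, ENNReal.ofReal (fppTime (cartPower (⊤ : SimpleGraph Bool) n)
          (fun e => T n e ω) (fun _ => false) (fun i => decide ((i : Fin n).val = 0)))
        ∂(ℙ : Measure (Ω n)) ≤
      ENNReal.ofReal (C * (n : ℝ) ^ (-(1 / 3 : ℝ))) := by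
  refine ⟨36, by norm_num, fun n hn ↦ ?_⟩
  have hneighbour : (fun i : Fin n ↦ decide (i.val = 0)) = update (fun _ ↦ false) ⟨0, hn⟩ true := by
    ext i
    simp [update_apply, Fin.ext_iff]
  rw [hneighbour]
  exact (lintegral_fppTime_cartPower_le (x := fun _ ↦ false) (i := ⟨0, hn⟩) (a := true)
    (by simp) (b := fun _ ↦ true) (fun _ _ ↦ by simp)
    (hmeas n) (hindep n) (hdist n)).trans (lintegral_expSumTailBound_le hn)

/-- Let `T(n,1)` be the first-passage time between two vertices at
Hamming distance `1` in the hypercube `K₂^n` with i.i.d. `Exp(1)` edge weights. Then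
there is a constant `C > 0` with `E[T(n,1)] ≤ C·n^{−1/3}` for all `n ≥ 1`. -/
theorem hypercube_distance_one_expectation
    (Ω : ℕ → Type*) [∀ n, MeasureSpace (Ω n)]
    (hprob : ∀ n, IsProbabilityMeasure (ℙ : Measure (Ω n)))
    (T : ∀ n, (cartPower (⊤ : SimpleGraph Bool) n).edgeSet → Ω n → ℝ)
    (hmeas : ∀ n e, Measurable (T n e))
    (hindep : ∀ n, iIndepFun (β := fun _ => ℝ) (m := fun _ => Real.measurableSpace) (T n) ℙ)
    (hdist : ∀ n e, Measure.map (T n e) ℙ = expMeasure 1) :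
    ∃ C : ℝ, 0 < C ∧ ∀ n : ℕ, 1 ≤ n →
      ∫⁻ ω, ENNReal.ofReal (fppTime (cartPower (⊤ : SimpleGraph Bool) n)
          (fun e => T n e ω) (fun _ => false) (fun i => decide ((i : Fin n).val = 0)))
        ∂(ℙ : Measure (Ω n)) ≤
      ENNReal.ofReal (C * (n : ℝ) ^ (-(1 / 3 : ℝ))) :=
  hypercube_distance_one_expectation_general Ω T hmeas hindep hdist

end FPP
end
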